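/- Let F be a complex Hilbert space and f ∈ L²([0,1], F). If E_{0,s}^F f + E_{1,s}^F f = f for every 0 ≤ s < 1 (equivalently, the 1-periodic extension of f to ℝ is invariant a.e. under every translation), then f is a.e. constant: there exists y ∈ F such that f(x) = y for a.e. x ∈ [0,1]. -/

import Mathlib

open MeasureTheory ContinuousLinearMap
open scoped ENNReal NNReal InnerProductSpace ComplexInnerProductSpace

noncomputable section

/-- Lebesgue measure restricted to `[0, 1]`; `Lp F 2 muI` plays the role of `L²([0,1], F)`. -/
def muI : Measure ℝ := (volume : Measure ℝ).restrict (Set.Icc 0 1)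

/-- `T` is the operator `E_{0,s}^F` on `L²([0,1], F)`:
`(T f)(x) = f (x - s)` for `s ≤ x ≤ 1` and `(T f)(x) = 0` for `x < s`. -/
def IsE0 (F : Type) [NormedAddCommGroup F] [InnerProductSpace ℂ F]
    (s : ℝ) (T : Lp F 2 muI →L[ℂ] Lp F 2 muI) : Prop :=
  ∀ f : Lp F 2 muI,
    (T f : ℝ → F) =ᵐ[muI] fun x => if s ≤ x then (f : ℝ → F) (x - s) else 0

/-- `T` is the operator `E_{1,s}^F` on `L²([0,1], F)`:
`(T f)(x) = f (1 - s + x)` for `x ≤ s` and `(T f)(x) = 0` for `s < x ≤ 1`. -/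
def IsE1 (F : Type) [NormedAddCommGroup F] [InnerProductSpace ℂ F]
    (s : ℝ) (T : Lp F 2 muI →L[ℂ] Lp F 2 muI) : Prop :=
  ∀ f : Lp F 2 muI,
    (T f : ℝ → F) =ᵐ[muI] fun x => if x ≤ s then (f : ℝ → F) (1 - s + x) else 0

set_option linter.unusedSectionVars false

namespace TIC

variable {F : Type} [NormedAddCommGroup F] [InnerProductSpace ℂ F] [CompleteSpace F]

/-- The underlying function of `E0`. -/
def shift0 (s : ℝ) (h : ℝ → F) : ℝ → F := fun x => if s ≤ x then h (x - s) else 0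

/-- The underlying function of `E1`. -/
def shift1 (s : ℝ) (h : ℝ → F) : ℝ → F := fun x => if x ≤ s then h (1 - s + x) else 0

lemma shift0_congr {s : ℝ} (hs0 : 0 ≤ s) (hs1 : s ≤ 1) {h₁ h₂ : ℝ → F}
    (h : h₁ =ᵐ[muI] h₂) : shift0 s h₁ =ᵐ[muI] shift0 s h₂ := by
  have hN : volume ({x : ℝ | h₁ x ≠ h₂ x} ∩ Set.Icc 0 1) = 0 := by
    have := h
    rwa [Filter.EventuallyEq, ae_iff, muI, Measure.restrict_apply' measurableSet_Icc] at this
  rw [Filter.EventuallyEq, ae_iff, muI, Measure.restrict_apply' measurableSet_Icc]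
  refine measure_mono_null ?_
    ((measurePreserving_sub_right volume s).quasiMeasurePreserving.preimage_null hN)
  rintro x ⟨hne, hx0, hx1⟩
  simp only [Set.mem_setOf_eq, shift0] at hne
  by_cases hsx : s ≤ x
  · simp only [hsx, if_true] at hne
    refine ⟨hne, ?_, ?_⟩ <;> simp only [Set.mem_setOf_eq] <;> linarith
  · simp [hsx] at hne
lemma shift1_congr {s : ℝ} (hs0 : 0 ≤ s) (hs1 : s ≤ 1) {h₁ h₂ : ℝ → F}
    (h : h₁ =ᵐ[muI] h₂) : shift1 s h₁ =ᵐ[muI] shift1 s h₂ := by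
  have hN : volume ({x : ℝ | h₁ x ≠ h₂ x} ∩ Set.Icc 0 1) = 0 := by
    have := h
    rwa [Filter.EventuallyEq, ae_iff, muI, Measure.restrict_apply' measurableSet_Icc] at this
  have hmp : MeasurePreserving (fun x : ℝ => 1 - s + x) volume volume := by
    have h' := measurePreserving_add_left (volume : Measure ℝ) (1 - s)
    exact h'
  rw [Filter.EventuallyEq, ae_iff, muI, Measure.restrict_apply' measurableSet_Icc]
  refine measure_mono_null ?_ (hmp.quasiMeasurePreserving.preimage_null hN)
  rintro x ⟨hne, hx0, hx1⟩
  simp only [Set.mem_setOf_eq, shift1] at hne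
  by_cases hsx : x ≤ s
  · simp only [hsx, if_true] at hne
    refine ⟨hne, ?_, ?_⟩ <;> simp only [Set.mem_setOf_eq] <;> linarith
  · simp [hsx] at hne

lemma shift0_sm {s : ℝ} {φ : ℝ → F} (hφ : StronglyMeasurable φ) :
    StronglyMeasurable (shift0 s φ) :=
  StronglyMeasurable.ite measurableSet_Ici (hφ.comp_measurable (measurable_id.sub_const s))
    stronglyMeasurable_const

lemma shift1_sm {s : ℝ} {φ : ℝ → F} (hφ : StronglyMeasurable φ) :
    StronglyMeasurable (shift1 s φ) :=
  StronglyMeasurable.ite measurableSet_Iic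
    (hφ.comp_measurable (measurable_const.add measurable_id)) stronglyMeasurable_const

lemma eLpNorm_shift0_le {s : ℝ} (hs0 : 0 ≤ s) (hs1 : s ≤ 1) {φ : ℝ → F}
    (hφ : StronglyMeasurable φ) :
    eLpNorm (shift0 s φ) 2 muI ≤ eLpNorm φ 2 muI := by
  have key : (Set.Icc (0:ℝ) 1).indicator (shift0 s φ)
      = ((Set.Icc (0:ℝ) (1-s)).indicator φ) ∘ (fun x => x - s) := by
    funext x
    simp only [Set.indicator_apply, shift0, Function.comp_apply, Set.mem_Icc]
    by_cases h1 : s ≤ x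
    · by_cases h2 : x ≤ 1
      · rw [if_pos ⟨le_trans hs0 h1, h2⟩, if_pos h1, if_pos ⟨by linarith, by linarith⟩]
      · rw [if_neg (fun hc => h2 hc.2), if_neg (fun hc => h2 (by linarith [hc.2]))]
    · rw [if_neg (show ¬(0 ≤ x - s ∧ x - s ≤ 1 - s) from fun hc => h1 (by linarith [hc.1]))]
      by_cases h2 : 0 ≤ x ∧ x ≤ 1
      · rw [if_pos h2, if_neg h1]
      · rw [if_neg h2]
  calc eLpNorm (shift0 s φ) 2 muI
      = eLpNorm ((Set.Icc (0:ℝ) 1).indicator (shift0 s φ)) 2 volume :=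
        (eLpNorm_indicator_eq_eLpNorm_restrict measurableSet_Icc).symm
    _ = eLpNorm (((Set.Icc (0:ℝ) (1-s)).indicator φ) ∘ (fun x => x - s)) 2 volume := by
        rw [key]
    _ = eLpNorm ((Set.Icc (0:ℝ) (1-s)).indicator φ) 2 volume :=
        eLpNorm_comp_measurePreserving
          ((hφ.indicator measurableSet_Icc).aestronglyMeasurable)
          (measurePreserving_sub_right volume s)
    _ = eLpNorm φ 2 (volume.restrict (Set.Icc 0 (1-s))) :=
        eLpNorm_indicator_eq_eLpNorm_restrict measurableSet_Icc
    _ ≤ eLpNorm φ 2 muI := by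
        exact eLpNorm_mono_measure _
          (Measure.restrict_mono (Set.Icc_subset_Icc le_rfl (by linarith)) le_rfl)

lemma eLpNorm_shift1_le {s : ℝ} (hs0 : 0 ≤ s) (hs1 : s ≤ 1) {φ : ℝ → F}
    (hφ : StronglyMeasurable φ) :
    eLpNorm (shift1 s φ) 2 muI ≤ eLpNorm φ 2 muI := by
  have key : (Set.Icc (0:ℝ) 1).indicator (shift1 s φ)
      = ((Set.Icc (1-s) 1).indicator φ) ∘ (fun x => 1 - s + x) := by
    funext x
    simp only [Set.indicator_apply, shift1, Function.comp_apply, Set.mem_Icc]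
    by_cases h1 : x ≤ s
    · by_cases h2 : 0 ≤ x
      · rw [if_pos ⟨h2, by linarith⟩, if_pos h1, if_pos ⟨by linarith, by linarith⟩]
      · rw [if_neg (fun hc => h2 hc.1), if_neg (fun hc => h2 (by linarith [hc.1]))]
    · rw [if_neg (show ¬(1 - s ≤ 1 - s + x ∧ 1 - s + x ≤ 1) from
          fun hc => h1 (by linarith [hc.2]))]
      by_cases h2 : 0 ≤ x ∧ x ≤ 1
      · rw [if_pos h2, if_neg h1]
      · rw [if_neg h2]
  calc eLpNorm (shift1 s φ) 2 muI
      = eLpNorm ((Set.Icc (0:ℝ) 1).indicator (shift1 s φ)) 2 volume :=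
        (eLpNorm_indicator_eq_eLpNorm_restrict measurableSet_Icc).symm
    _ = eLpNorm (((Set.Icc (1-s) 1).indicator φ) ∘ (fun x => 1 - s + x)) 2 volume := by
        rw [key]
    _ = eLpNorm ((Set.Icc (1-s) 1).indicator φ) 2 volume :=
        eLpNorm_comp_measurePreserving
          ((hφ.indicator measurableSet_Icc).aestronglyMeasurable)
          (measurePreserving_add_left volume (1-s))
    _ = eLpNorm φ 2 (volume.restrict (Set.Icc (1-s) 1)) :=
        eLpNorm_indicator_eq_eLpNorm_restrict measurableSet_Icc
    _ ≤ eLpNorm φ 2 muI := by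
        exact eLpNorm_mono_measure _
          (Measure.restrict_mono (Set.Icc_subset_Icc (by linarith) le_rfl) le_rfl)

lemma memLp_shift0 {s : ℝ} (hs0 : 0 ≤ s) (hs1 : s ≤ 1) (g : Lp F 2 muI) :
    MemLp (shift0 s (⇑g)) 2 muI := by
  have heq : ⇑g =ᵐ[muI] (Lp.aestronglyMeasurable g).mk _ := (Lp.aestronglyMeasurable g).ae_eq_mk
  have hsm := (Lp.aestronglyMeasurable g).stronglyMeasurable_mk
  have h1 : shift0 s (⇑g) =ᵐ[muI] shift0 s ((Lp.aestronglyMeasurable g).mk _) :=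
    shift0_congr hs0 hs1 heq
  constructor
  · exact ((shift0_sm hsm).aestronglyMeasurable).congr h1.symm
  · rw [eLpNorm_congr_ae h1]
    refine lt_of_le_of_lt (eLpNorm_shift0_le hs0 hs1 hsm) ?_
    rw [← eLpNorm_congr_ae heq]
    exact Lp.eLpNorm_lt_top g

lemma memLp_shift1 {s : ℝ} (hs0 : 0 ≤ s) (hs1 : s ≤ 1) (g : Lp F 2 muI) :
    MemLp (shift1 s (⇑g)) 2 muI := by
  have heq : ⇑g =ᵐ[muI] (Lp.aestronglyMeasurable g).mk _ := (Lp.aestronglyMeasurable g).ae_eq_mk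
  have hsm := (Lp.aestronglyMeasurable g).stronglyMeasurable_mk
  have h1 : shift1 s (⇑g) =ᵐ[muI] shift1 s ((Lp.aestronglyMeasurable g).mk _) :=
    shift1_congr hs0 hs1 heq
  constructor
  · exact ((shift1_sm hsm).aestronglyMeasurable).congr h1.symm
  · rw [eLpNorm_congr_ae h1]
    refine lt_of_le_of_lt (eLpNorm_shift1_le hs0 hs1 hsm) ?_
    rw [← eLpNorm_congr_ae heq]
    exact Lp.eLpNorm_lt_top g

/-- The operator `E0` as a continuous linear map. -/
def E0clm (s : ℝ) (hs0 : 0 ≤ s) (hs1 : s ≤ 1) : Lp F 2 muI →L[ℂ] Lp F 2 muI :=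
  LinearMap.mkContinuous
    { toFun := fun g => (memLp_shift0 hs0 hs1 g).toLp _
      map_add' := by
        intro g₁ g₂
        rw [← MemLp.toLp_add (memLp_shift0 hs0 hs1 g₁) (memLp_shift0 hs0 hs1 g₂)]
        refine MemLp.toLp_congr _ _ ?_
        refine (shift0_congr hs0 hs1 (Lp.coeFn_add g₁ g₂)).trans (Filter.EventuallyEq.of_eq ?_)
        funext x
        simp only [shift0, Pi.add_apply]
        split_ifs <;> simp
      map_smul' := by
        intro c g
        rw [RingHom.id_apply, ← MemLp.toLp_const_smul c (memLp_shift0 hs0 hs1 g)]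
        refine MemLp.toLp_congr (memLp_shift0 hs0 hs1 (c • g))
          ((memLp_shift0 hs0 hs1 g).const_smul c) ?_
        refine (shift0_congr hs0 hs1 (Lp.coeFn_smul c g)).trans (Filter.EventuallyEq.of_eq ?_)
        funext x
        simp only [shift0, Pi.smul_apply]
        split_ifs <;> simp }
    1
    (by
      intro g
      simp only [LinearMap.coe_mk, AddHom.coe_mk, one_mul]
      rw [Lp.norm_toLp, Lp.norm_def]
      have heq : ⇑g =ᵐ[muI] (Lp.aestronglyMeasurable g).mk _ :=
        (Lp.aestronglyMeasurable g).ae_eq_mk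
      have hsm := (Lp.aestronglyMeasurable g).stronglyMeasurable_mk
      refine ENNReal.toReal_mono (Lp.eLpNorm_ne_top g) ?_
      calc eLpNorm (shift0 s (⇑g)) 2 muI
          = eLpNorm (shift0 s ((Lp.aestronglyMeasurable g).mk _)) 2 muI :=
            eLpNorm_congr_ae (shift0_congr hs0 hs1 heq)
        _ ≤ eLpNorm ((Lp.aestronglyMeasurable g).mk _) 2 muI := eLpNorm_shift0_le hs0 hs1 hsm
        _ = eLpNorm (⇑g) 2 muI := (eLpNorm_congr_ae heq).symm)

/-- The operator `E1` as a continuous linear map. -/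
def E1clm (s : ℝ) (hs0 : 0 ≤ s) (hs1 : s ≤ 1) : Lp F 2 muI →L[ℂ] Lp F 2 muI :=
  LinearMap.mkContinuous
    { toFun := fun g => (memLp_shift1 hs0 hs1 g).toLp _
      map_add' := by
        intro g₁ g₂
        rw [← MemLp.toLp_add (memLp_shift1 hs0 hs1 g₁) (memLp_shift1 hs0 hs1 g₂)]
        refine MemLp.toLp_congr _ _ ?_
        refine (shift1_congr hs0 hs1 (Lp.coeFn_add g₁ g₂)).trans (Filter.EventuallyEq.of_eq ?_)
        funext x
        simp only [shift1, Pi.add_apply]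
        split_ifs <;> simp
      map_smul' := by
        intro c g
        rw [RingHom.id_apply, ← MemLp.toLp_const_smul c (memLp_shift1 hs0 hs1 g)]
        refine MemLp.toLp_congr (memLp_shift1 hs0 hs1 (c • g))
          ((memLp_shift1 hs0 hs1 g).const_smul c) ?_
        refine (shift1_congr hs0 hs1 (Lp.coeFn_smul c g)).trans (Filter.EventuallyEq.of_eq ?_)
        funext x
        simp only [shift1, Pi.smul_apply]
        split_ifs <;> simp }
    1
    (by
      intro g
      simp only [LinearMap.coe_mk, AddHom.coe_mk, one_mul]
      rw [Lp.norm_toLp, Lp.norm_def]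
      have heq : ⇑g =ᵐ[muI] (Lp.aestronglyMeasurable g).mk _ :=
        (Lp.aestronglyMeasurable g).ae_eq_mk
      have hsm := (Lp.aestronglyMeasurable g).stronglyMeasurable_mk
      refine ENNReal.toReal_mono (Lp.eLpNorm_ne_top g) ?_
      calc eLpNorm (shift1 s (⇑g)) 2 muI
          = eLpNorm (shift1 s ((Lp.aestronglyMeasurable g).mk _)) 2 muI :=
            eLpNorm_congr_ae (shift1_congr hs0 hs1 heq)
        _ ≤ eLpNorm ((Lp.aestronglyMeasurable g).mk _) 2 muI := eLpNorm_shift1_le hs0 hs1 hsm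
        _ = eLpNorm (⇑g) 2 muI := (eLpNorm_congr_ae heq).symm)

lemma E0clm_isE0 (s : ℝ) (hs0 : 0 ≤ s) (hs1 : s ≤ 1) :
    IsE0 F s (E0clm s hs0 hs1) := fun g => (memLp_shift0 hs0 hs1 g).coeFn_toLp

lemma E1clm_isE1 (s : ℝ) (hs0 : 0 ≤ s) (hs1 : s ≤ 1) :
    IsE1 F s (E1clm s hs0 hs1) := fun g => (memLp_shift1 hs0 hs1 g).coeFn_toLp

end TIC

open TIC in
/-- A function `f ∈ L²([0,1], F)` with `E_{0,s}^F f + E_{1,s}^F f = f` for every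
`0 ≤ s < 1` (i.e. whose periodic extension is invariant under all translations) is a.e.
constant. -/
theorem translation_invariant_is_constant (F : Type) [NormedAddCommGroup F]
    [InnerProductSpace ℂ F] [CompleteSpace F] (f : Lp F 2 muI)
    (hf : ∀ s : ℝ, 0 ≤ s → s < 1 → ∀ E0 E1 : Lp F 2 muI →L[ℂ] Lp F 2 muI,
      IsE0 F s E0 → IsE1 F s E1 → E0 f + E1 f = f) :
    ∃ y : F, (f : ℝ → F) =ᵐ[muI] fun _ => y := by
  classical
  haveI : SFinite muI := inferInstanceAs (SFinite ((volume : Measure ℝ).restrict (Set.Icc 0 1)))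
  set φ : ℝ → F := (Lp.aestronglyMeasurable f).mk _ with hφdef
  have hsm : StronglyMeasurable φ := (Lp.aestronglyMeasurable f).stronglyMeasurable_mk
  have hfeq : ⇑f =ᵐ[muI] φ := (Lp.aestronglyMeasurable f).ae_eq_mk
  -- single point sets are muI-null
  have hpt : ∀ a : ℝ, muI {a} = 0 := by
    intro a
    rw [muI, Measure.restrict_apply' measurableSet_Icc]
    exact measure_mono_null Set.inter_subset_left (Real.volume_singleton)
  -- the key pointwise invariance, for each fixed s
  have key : ∀ s : ℝ, 0 ≤ s → s < 1 →
      ∀ᵐ x ∂muI, φ x = φ (if s ≤ x then x - s else 1 - s + x) := by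
    intro s hs0 hs1
    have heq := hf s hs0 hs1 (E0clm s hs0 hs1.le) (E1clm s hs0 hs1.le)
      (E0clm_isE0 s hs0 hs1.le) (E1clm_isE1 s hs0 hs1.le)
    have h1 : ⇑(E0clm s hs0 hs1.le f + E1clm s hs0 hs1.le f) =ᵐ[muI] ⇑f := by rw [heq]
    have h2 := Lp.coeFn_add (E0clm s hs0 hs1.le f) (E1clm s hs0 hs1.le f)
    have h3 : ⇑(E0clm (F := F) s hs0 hs1.le f) =ᵐ[muI] shift0 s φ :=
      (E0clm_isE0 s hs0 hs1.le f).trans (shift0_congr hs0 hs1.le hfeq)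
    have h4 : ⇑(E1clm (F := F) s hs0 hs1.le f) =ᵐ[muI] shift1 s φ :=
      (E1clm_isE1 s hs0 hs1.le f).trans (shift1_congr hs0 hs1.le hfeq)
    have h5 : ∀ᵐ x ∂muI, x ≠ s := by
      rw [ae_iff]
      simpa using hpt s
    filter_upwards [h1, h2, h3, h4, h5, hfeq] with x e1 e2 e3 e4 hxs ef
    have hsum : shift0 s φ x + shift1 s φ x = φ x := by
      rw [← e3, ← e4, ← Pi.add_apply, ← e2, e1, ef]
    by_cases hc : s ≤ x
    · have hc' : ¬ x ≤ s := fun h => hxs (le_antisymm h hc)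
      rw [if_pos hc]
      rw [shift0, shift1] at hsum
      simp only [hc, hc', if_true, if_false, add_zero] at hsum
      exact hsum.symm
    · have hc' : x ≤ s := le_of_not_ge hc
      rw [if_neg hc]
      rw [shift0, shift1] at hsum
      simp only [hc, hc', if_true, if_false, zero_add] at hsum
      exact hsum.symm
  -- the "transport" map, as a function of (s, x)
  set T : ℝ × ℝ → ℝ := fun z => if z.1 ≤ z.2 then z.2 - z.1 else 1 - z.1 + z.2 with hTdef
  have hTmeas : Measurable T :=
    Measurable.ite (measurableSet_le measurable_fst measurable_snd)
      (measurable_snd.sub measurable_fst)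
      ((measurable_const.sub measurable_fst).add measurable_snd)
  -- the bad set
  set B : Set (ℝ × ℝ) := {z | φ z.2 = φ (T z)}ᶜ with hBdef
  have hB : MeasurableSet B :=
    (MeasureTheory.StronglyMeasurable.measurableSet_eq_fun (hsm.comp_measurable measurable_snd)
      (hsm.comp_measurable hTmeas)).compl
  have hmuIne : (muI : Measure ℝ) ≠ 0 := by
    intro h0
    have : muI (Set.Icc (0:ℝ) 1) = 1 := by
      rw [muI, Measure.restrict_apply' measurableSet_Icc]
      simp [Real.volume_Icc]
    rw [h0] at this
    simp at this
  have hIco : ∀ᵐ s ∂muI, s ∈ Set.Ico (0:ℝ) 1 := by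
    rw [ae_iff]
    rw [muI, Measure.restrict_apply' measurableSet_Icc]
    refine measure_mono_null (fun x hx => show x ∈ ({1} : Set ℝ) from ?_)
      (Real.volume_singleton (a := (1:ℝ)))
    rcases hx with ⟨hx1, hx2, hx3⟩
    simp only [Set.mem_setOf_eq, Set.mem_Ico, not_and, not_lt] at hx1
    have : x = 1 := le_antisymm hx3 (hx1 hx2)
    exact this
  have hprod : (muI.prod muI) B = 0 := by
    rw [Measure.measure_prod_null hB]
    filter_upwards [hIco] with s hs
    have hae := key s hs.1 hs.2
    rw [ae_iff] at hae
    convert hae using 2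
    rfl
    rfl
  have hprodsw : (muI.prod muI) (Prod.swap ⁻¹' B) = 0 := by
    rw [← Measure.prod_swap, Measure.map_apply measurable_swap hB] at hprod
    exact hprod
  have hswap : ∀ᵐ x ∂muI, muI {s | (s, x) ∈ B} = 0 := by
    have hBsw : MeasurableSet (Prod.swap ⁻¹' B) := measurable_swap hB
    have := (Measure.measure_prod_null hBsw).mp hprodsw
    filter_upwards [this] with x hx
    convert hx using 2
    rfl
    rfl
  have hmem : ∀ᵐ x ∂muI, x ∈ Set.Icc (0:ℝ) 1 := by
    rw [muI]
    exact ae_restrict_mem measurableSet_Icc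
  haveI : (ae muI).NeBot := ae_neBot.mpr hmuIne
  obtain ⟨x₀, hx₀I, hx₀⟩ := (hmem.and hswap).exists
  -- the section map σ
  set σ : ℝ → ℝ := fun s => if s ≤ x₀ then x₀ - s else 1 - s + x₀ with hσdef
  have hσmeas : Measurable σ :=
    Measurable.ite measurableSet_Iic (measurable_const.sub measurable_id)
      ((measurable_const.sub measurable_id).add measurable_const)
  have hsub_left : ∀ c : ℝ, MeasurePreserving (fun x : ℝ => c - x) volume volume := by
    intro c
    have h := (measurePreserving_add_left (volume : Measure ℝ) c).comp
      (Measure.measurePreserving_neg (volume : Measure ℝ))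
    simpa [Function.comp_def, sub_eq_add_neg] using h
  have hmap : Measure.map σ muI = muI := by
    have hsplit : muI = volume.restrict (Set.Icc 0 x₀) + volume.restrict (Set.Ioc x₀ 1) := by
      rw [muI, ← Measure.restrict_union ?_ measurableSet_Ioc,
        Set.Icc_union_Ioc_eq_Icc hx₀I.1 hx₀I.2]
      exact Set.disjoint_left.mpr (fun a ha hb => absurd ha.2 (not_le.mpr hb.1))
    have hm1 : Measure.map σ (volume.restrict (Set.Icc 0 x₀))
        = volume.restrict (Set.Icc 0 x₀) := by
      have hcg : σ =ᵐ[volume.restrict (Set.Icc 0 x₀)] (fun s => x₀ - s) := by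
        refine (ae_restrict_iff' measurableSet_Icc).mpr (Filter.Eventually.of_forall ?_)
        intro s hs
        simp [hσdef, hs.2]
      rw [Measure.map_congr hcg]
      have hpre : (fun s : ℝ => x₀ - s) ⁻¹' (Set.Icc 0 x₀) = Set.Icc 0 x₀ := by
        ext t
        simp only [Set.mem_preimage, Set.mem_Icc]
        constructor <;> rintro ⟨a, b⟩ <;> constructor <;> linarith
      rw [← hpre, ← Measure.restrict_map (hsub_left x₀).measurable measurableSet_Icc,
        (hsub_left x₀).map_eq, hpre]
    have hm2 : Measure.map σ (volume.restrict (Set.Ioc x₀ 1))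
        = volume.restrict (Set.Ioc x₀ 1) := by
      have hcg : σ =ᵐ[volume.restrict (Set.Ioc x₀ 1)] (fun s => (1 + x₀) - s) := by
        refine (ae_restrict_iff' measurableSet_Ioc).mpr (Filter.Eventually.of_forall ?_)
        intro s hs
        have : ¬ s ≤ x₀ := not_le.mpr hs.1
        simp only [hσdef, this, if_false]
        ring
      rw [Measure.map_congr hcg]
      have hpre : (fun s : ℝ => (1 + x₀) - s) ⁻¹' (Set.Ico x₀ 1) = Set.Ioc x₀ 1 := by
        ext t
        simp only [Set.mem_preimage, Set.mem_Ico, Set.mem_Ioc]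
        constructor <;> rintro ⟨a, b⟩ <;> constructor <;> linarith
      have : volume.restrict (Set.Ioc x₀ 1) = volume.restrict ((fun s : ℝ => (1+x₀) - s) ⁻¹' (Set.Ico x₀ 1)) := by rw [hpre]
      nth_rewrite 1 [this]
      rw [← Measure.restrict_map (hsub_left (1+x₀)).measurable measurableSet_Ico,
        (hsub_left (1+x₀)).map_eq]
      exact Measure.restrict_congr_set Ico_ae_eq_Ioc
    rw [hsplit, Measure.map_add _ _ hσmeas, hm1, hm2]
  -- conclude
  refine ⟨φ x₀, hfeq.trans ?_⟩
  have hA : MeasurableSet {t : ℝ | φ t = φ x₀} :=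
    MeasureTheory.StronglyMeasurable.measurableSet_eq_fun hsm stronglyMeasurable_const
  have hnull : muI {t : ℝ | φ t = φ x₀}ᶜ = 0 := by
    have happ : muI ({t : ℝ | φ t = φ x₀}ᶜ) = muI (σ ⁻¹' ({t : ℝ | φ t = φ x₀}ᶜ)) := by
      conv_lhs => rw [← hmap]
      rw [Measure.map_apply hσmeas hA.compl]
    rw [happ]
    refine measure_mono_null (fun s hs => ?_) hx₀
    simp only [Set.mem_preimage, Set.mem_compl_iff, Set.mem_setOf_eq] at hs
    simp only [Set.mem_setOf_eq, hBdef, Set.mem_compl_iff, Set.mem_setOf_eq, hTdef]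
    intro hcon
    exact hs hcon.symm
  rw [Filter.EventuallyEq, ae_iff]
  refine measure_mono_null (fun t ht => ?_) hnull
  exact ht
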